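/- arXiv:1410.5259 — 2 statements merged into one kernel-verified Lean document; each statement's English description precedes it below -/
import Mathlib

section
/- Let d ≥ 2, let T be a centrally symmetric triangulation of a convex polygon with 2d+2 vertices, and let p be any vertex with clockwise successor q = p+1. Then the set of edges T∖p, obtained by removing the edges {p,q} and {p̄,q̄} from T and replacing p by q and p̄ by q̄ in every other edge of T, is a centrally symmetric triangulation of a convex polygon with 2d vertices. -/
namespace Cyclo

/-! Centrally symmetric triangulations of a convex polygon with `n` vertices,
labelled clockwise by `ZMod n`. -/

/-- The vertex opposite to `x` of the polygon with `n` vertices. -/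
def opp (n : ℕ) (x : ZMod n) : ZMod n := x + ((n / 2 : ℕ) : ZMod n)

/-- `e` is an edge on the polygon: a set of two distinct vertices. -/
def IsEdge (n : ℕ) (e : Finset (ZMod n)) : Prop :=
  ∃ x y : ZMod n, x ≠ y ∧ e = {x, y}

/-- `e` is a boundary edge of the polygon. -/
def IsBoundaryEdge (n : ℕ) (e : Finset (ZMod n)) : Prop :=
  ∃ x : ZMod n, e = {x, x + 1}

/-- `y` lies strictly between `x` and `z` in the clockwise cyclic order. -/
def Sbtw (n : ℕ) (x y z : ZMod n) : Prop :=
  0 < (y - x).val ∧ (y - x).val < (z - x).val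

/-- Two edges cross: exactly one endpoint of one lies strictly between the
endpoints of the other in the clockwise cyclic order. -/
def Crosses (n : ℕ) (e f : Finset (ZMod n)) : Prop :=
  ∃ a b c d : ZMod n, e = {a, b} ∧ f = {c, d} ∧ Sbtw n a c b ∧ Sbtw n b d a

/-- A triangulation: a maximal set of pairwise non-crossing edges. -/
def IsTriangulation (n : ℕ) (T : Set (Finset (ZMod n))) : Prop :=
  (∀ e ∈ T, IsEdge n e) ∧
  (∀ e ∈ T, ∀ f ∈ T, ¬ Crosses n e f) ∧
  (∀ e, IsEdge n e → (∀ f ∈ T, ¬ Crosses n e f ∧ ¬ Crosses n f e) → e ∈ T)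

/-- `T` is centrally symmetric. -/
def IsCS (n : ℕ) (T : Set (Finset (ZMod n))) : Prop :=
  ∀ x y : ZMod n, ({x, y} : Finset (ZMod n)) ∈ T →
    ({opp n x, opp n y} : Finset (ZMod n)) ∈ T

/-- `T` is a centrally symmetric triangulation. -/
def IsCST (n : ℕ) (T : Set (Finset (ZMod n))) : Prop :=
  IsTriangulation n T ∧ IsCS n T

/-- `T'` is obtained from `T` by flipping the interior edge `{x,x'}` (and its
centrally symmetric copy `{x̄,x̄'}`): the four boundary edges of the quadrilateral
with diagonal `{x,x'}` belong to `T`, and `{x,x'}`, `{x̄,x̄'}` are replaced by the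
opposite diagonals `{y,y'}`, `{ȳ,ȳ'}`. -/
def IsFlip (n : ℕ) (T T' : Set (Finset (ZMod n))) : Prop :=
  IsCST n T ∧ IsCST n T' ∧
  ∃ x x' y y' : ZMod n,
    ¬ IsBoundaryEdge n {x, x'} ∧
    ({x, x'} : Finset (ZMod n)) ∈ T ∧ ({x, y} : Finset (ZMod n)) ∈ T ∧
    ({y, x'} : Finset (ZMod n)) ∈ T ∧ ({x', y'} : Finset (ZMod n)) ∈ T ∧
    ({y', x} : Finset (ZMod n)) ∈ T ∧
    T' = (T \ {({x, x'} : Finset (ZMod n)), {opp n x, opp n x'}}) ∪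
         {({y, y'} : Finset (ZMod n)), {opp n y, opp n y'}}

/-- The flip graph (on all sets of edges; non-triangulations are isolated vertices). -/
def flipGraph (n : ℕ) : SimpleGraph (Set (Finset (ZMod n))) :=
  SimpleGraph.fromRel (IsFlip n)

/-- The flip distance of two centrally symmetric triangulations. -/
noncomputable def delta (n : ℕ) (T T' : Set (Finset (ZMod n))) : ℕ := (flipGraph n).dist T T'

/-- The flip graph on the centrally symmetric triangulations of the `n`-gon;
it is isomorphic to the graph of the `(n/2 - 1)`-dimensional cyclohedron. -/
def flipGraphCS (n : ℕ) : SimpleGraph {T : Set (Finset (ZMod n)) // IsCST n T} :=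
  SimpleGraph.fromRel fun T T' => IsFlip n T.1 T'.1

/-- `g 0, …, g k` is a geodesic from `Tm` to `Tp`. -/
def IsGeodesic (n : ℕ) (Tm Tp : Set (Finset (ZMod n)))
    (g : ℕ → Set (Finset (ZMod n))) (k : ℕ) : Prop :=
  g 0 = Tm ∧ g k = Tp ∧ (∀ i < k, (flipGraph n).Adj (g i) (g (i + 1))) ∧
    k = delta n Tm Tp

/-- The flip transforming `T` into `T'` is incident to the boundary edge `{p,q}`:
it removes `{p,r}` or `{q,r}`, where `r` is the apex of the triangle of `T` on `{p,q}`. -/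
def FlipIncident (n : ℕ) (T T' : Set (Finset (ZMod n))) (p q : ZMod n) : Prop :=
  ∃ r : ZMod n, ({p, r} : Finset (ZMod n)) ∈ T ∧ ({q, r} : Finset (ZMod n)) ∈ T ∧
    (({p, r} : Finset (ZMod n)) ∉ T' ∨ ({q, r} : Finset (ZMod n)) ∉ T')

/-- The number of flips along the path `g 0, …, g k` incident to `{p,q}`. -/
noncomputable def incidentCount (n : ℕ) (g : ℕ → Set (Finset (ZMod n))) (k : ℕ) (p q : ZMod n) : ℕ :=
  Nat.card {i : Fin k // FlipIncident n (g i.1) (g (i.1 + 1)) p q}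

/-- `x`, `y`, `z` are the vertices of a triangle of `T`. -/
def IsTriangleOf (n : ℕ) (T : Set (Finset (ZMod n))) (x y z : ZMod n) : Prop :=
  ({x, y} : Finset (ZMod n)) ∈ T ∧ ({y, z} : Finset (ZMod n)) ∈ T ∧
    ({x, z} : Finset (ZMod n)) ∈ T

/-- The three edges of the triangle with vertices `x`, `y`, `z`. -/
def triEdges (n : ℕ) (x y z : ZMod n) : Set (Finset (ZMod n)) :=
  {{x, y}, {y, z}, {x, z}}

/-- Relabelling map for the deletion of vertex `p` from the polygon with `2e+2`
vertices: `p` is replaced by `q = p+1`, `p̄` by `q̄`, and the remaining `2e`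
vertices are relabelled clockwise by `ZMod (2e)` (with `q ↦ 0`), so that
opposite vertices again differ by `e`. -/
def delV (e : ℕ) (p x : ZMod (2 * e + 2)) : ZMod (2 * e) :=
  ((if (x - p).val ≤ e + 1 then (x - p).val - 1 else (x - p).val - 2 : ℕ) : ZMod (2 * e))

/-- Deletion of vertex `p` from `T`: remove the edges `{p,p+1}` and `{p̄,p̄+1}`,
replace `p` by `p+1` and `p̄` by `p̄+1` in every other edge, and relabel. -/
def delT (e : ℕ) (p : ZMod (2 * e + 2)) (T : Set (Finset (ZMod (2 * e + 2)))) :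
    Set (Finset (ZMod (2 * e))) :=
  (fun s => s.image (delV e p)) ''
    (T \ {({p, p + 1} : Finset (ZMod (2 * e + 2))),
          {opp (2 * e + 2) p, opp (2 * e + 2) p + 1}})

/-- `DelButOne h k Tm Tp p₀ Sm Sp` holds when the pair `(Sm, Sp)` is obtained from
the pair `(Tm, Tp)` by successively deleting `k` of the `k+1` consecutive vertices
`p₀, p₀+1, …, p₀+k` (all but one of them), the deletions being performed in the
successively smaller polygons with the surviving vertices keeping their cyclic order. -/
def DelButOne : (h k : ℕ) → Set (Finset (ZMod (2 * (h + k) + 2))) →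
    Set (Finset (ZMod (2 * (h + k) + 2))) → ZMod (2 * (h + k) + 2) →
    Set (Finset (ZMod (2 * h + 2))) → Set (Finset (ZMod (2 * h + 2))) → Prop
  | _, 0, Tm, Tp, _, Sm, Sp => Sm = Tm ∧ Sp = Tp
  | h, k + 1, Tm, Tp, p₀, Sm, Sp =>
      ∃ j : ℕ, j ≤ k + 1 ∧
        DelButOne h k (delT (h + k + 1) (p₀ + (j : ZMod (2 * (h + (k + 1)) + 2))) Tm)
          (delT (h + k + 1) (p₀ + (j : ZMod (2 * (h + (k + 1)) + 2))) Tp)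
          (delV (h + k + 1) (p₀ + (j : ZMod (2 * (h + (k + 1)) + 2))) p₀) Sm Sp

/-- The set of boundary edges of the polygon with `n` vertices. -/
def boundarySet (n : ℕ) : Set (Finset (ZMod n)) := {e | IsBoundaryEdge n e}

/-- Closure of a set of edges under the central symmetry. -/
def symCl (n : ℕ) (S : Set (Finset (ZMod n))) : Set (Finset (ZMod n)) :=
  S ∪ (fun e => e.image (opp n)) '' S


/-- The interior edges (up to central symmetry) of the triangulation `A⁻`. -/
def AminusInterior (b c d : ℕ) : Set (Finset (ZMod (2 * d + 2))) :=
  {({(0 : ZMod (2 * d + 2)), opp (2 * d + 2) 0} : Finset (ZMod (2 * d + 2)))} ∪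
  {e | ∃ x : ℕ, c ≤ x ∧ x ≤ d ∧
    e = ({(0 : ZMod (2 * d + 2)), (x : ZMod (2 * d + 2))} : Finset (ZMod (2 * d + 2)))} ∪
  {e | ∃ x : ℕ, b ≤ x ∧ x ≤ c ∧
    e = ({(1 : ZMod (2 * d + 2)), (x : ZMod (2 * d + 2))} : Finset (ZMod (2 * d + 2)))} ∪
  {e | ∃ i : ℕ, 2 ≤ i ∧ i ≤ (b - 1) / 2 ∧
    e = ({(i : ZMod (2 * d + 2)), ((b + 1 - i : ℕ) : ZMod (2 * d + 2))} : Finset (ZMod (2 * d + 2)))} ∪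
  {e | ∃ i : ℕ, 2 ≤ i ∧ i ≤ b / 2 ∧
    e = ({(i : ZMod (2 * d + 2)), ((b + 2 - i : ℕ) : ZMod (2 * d + 2))} : Finset (ZMod (2 * d + 2)))}

/-- The triangulation `A⁻` of the `(2d+2)`-gon: its edges are the boundary edges,
the interior edges listed in `AminusInterior`, and their centrally symmetric copies. -/
def AminusSet (b c d : ℕ) : Set (Finset (ZMod (2 * d + 2))) :=
  boundarySet (2 * d + 2) ∪ symCl (2 * d + 2) (AminusInterior b c d)

/-- The edges that any triangulation `A⁺` of an `(a,b,c,d)`-pair must contain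
(`l = a + b - d + 2`): the edges `{1,d̄}` and `{l,c̄}`, the centrally symmetric
zigzag crossing `{0,0̄}`, and the centrally symmetric copies of all of these. -/
def AplusCore (a b c d : ℕ) : Set (Finset (ZMod (2 * d + 2))) :=
  symCl (2 * d + 2)
    ({({(1 : ZMod (2 * d + 2)), opp (2 * d + 2) (d : ZMod (2 * d + 2))} : Finset (ZMod (2 * d + 2)))} ∪
     {({((a + b - d + 2 : ℕ) : ZMod (2 * d + 2)),
        opp (2 * d + 2) (c : ZMod (2 * d + 2))} : Finset (ZMod (2 * d + 2)))} ∪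
     {e | ∃ i : ℕ, a + b - d + 2 ≤ i ∧ i ≤ c ∧
       e = ({(i : ZMod (2 * d + 2)),
             opp (2 * d + 2) ((c + (a + b - d + 2) - i : ℕ) : ZMod (2 * d + 2))} : Finset (ZMod (2 * d + 2)))} ∪
     {e | ∃ i : ℕ, a + b - d + 2 ≤ i ∧ i ≤ c - 1 ∧
       e = ({(i : ZMod (2 * d + 2)),
             opp (2 * d + 2) ((c + (a + b - d + 2) - 1 - i : ℕ) : ZMod (2 * d + 2))} : Finset (ZMod (2 * d + 2)))})

/-- `T` is an admissible triangulation `A⁺` for an `(a,b,c,d)`-pair: a centrally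
symmetric triangulation containing `AplusCore`, all of whose remaining interior
edges join a vertex of `{1,…,l}` to a vertex of `{c̄,…,d̄}` or a vertex of
`{1̄,…,l̄}` to a vertex of `{c,…,d}`, and in which every vertex of `{c̄,…,d̄}` is
joined to at least two vertices of `{1,…,l}` (so combs with at least two teeth
are attached at the vertices `c̄,…,d̄` and their opposites). -/
def IsAplus (a b c d : ℕ) (T : Set (Finset (ZMod (2 * d + 2)))) : Prop :=
  IsCST (2 * d + 2) T ∧ AplusCore a b c d ⊆ T ∧
  (∀ e ∈ T, ¬ IsBoundaryEdge (2 * d + 2) e → e ∉ AplusCore a b c d →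
    ∃ i j : ℕ, 1 ≤ i ∧ i ≤ a + b - d + 2 ∧ c ≤ j ∧ j ≤ d ∧
      (e = ({(i : ZMod (2 * d + 2)), opp (2 * d + 2) (j : ZMod (2 * d + 2))} : Finset (ZMod (2 * d + 2))) ∨
       e = ({opp (2 * d + 2) (i : ZMod (2 * d + 2)), (j : ZMod (2 * d + 2))} : Finset (ZMod (2 * d + 2))))) ∧
  (∀ j : ℕ, c ≤ j → j ≤ d →
    ∃ i₁ i₂ : ℕ, 1 ≤ i₁ ∧ i₁ ≤ a + b - d + 2 ∧ 1 ≤ i₂ ∧ i₂ ≤ a + b - d + 2 ∧ i₁ ≠ i₂ ∧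
      ({(i₁ : ZMod (2 * d + 2)), opp (2 * d + 2) (j : ZMod (2 * d + 2))} : Finset (ZMod (2 * d + 2))) ∈ T ∧
      ({(i₂ : ZMod (2 * d + 2)), opp (2 * d + 2) (j : ZMod (2 * d + 2))} : Finset (ZMod (2 * d + 2))) ∈ T)

/-- `(Am, Ap)` is an `(a,b,c,d)`-pair. -/
def IsABCDPair (a b c d : ℕ) (Am Ap : Set (Finset (ZMod (2 * d + 2)))) : Prop :=
  b < c ∧ c ≤ d ∧ d ≤ a + b ∧ 2 * a + b + 2 < 2 * d ∧
  Am = AminusSet b c d ∧ IsAplus a b c d Ap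

/-- The triangulation `U⁻`: interior edges `{0,0̄}`, `{0,x}` for `2 ≤ x ≤ d`,
and `{0̄,x̄}` for `2 ≤ x ≤ d`. -/
def UminusSet (d : ℕ) : Set (Finset (ZMod (2 * d + 2))) :=
  boundarySet (2 * d + 2) ∪ symCl (2 * d + 2)
    ({({(0 : ZMod (2 * d + 2)), opp (2 * d + 2) 0} : Finset (ZMod (2 * d + 2)))} ∪
     {e | ∃ x : ℕ, 2 ≤ x ∧ x ≤ d ∧
       e = ({(0 : ZMod (2 * d + 2)), (x : ZMod (2 * d + 2))} : Finset (ZMod (2 * d + 2)))})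

/-- The triangulation `U⁺`: interior edges the diagonal `{x,x̄}`, the edges `{0,v}`
for `v ∈ {2,…,x} ∪ {x̄,…,2d}`, and their centrally symmetric copies. -/
def UplusSet (d x : ℕ) : Set (Finset (ZMod (2 * d + 2))) :=
  boundarySet (2 * d + 2) ∪ symCl (2 * d + 2)
    ({({(x : ZMod (2 * d + 2)), opp (2 * d + 2) (x : ZMod (2 * d + 2))} : Finset (ZMod (2 * d + 2)))} ∪
     {e | ∃ v : ℕ, ((2 ≤ v ∧ v ≤ x) ∨ (x + d + 1 ≤ v ∧ v ≤ 2 * d)) ∧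
       e = ({(0 : ZMod (2 * d + 2)), (v : ZMod (2 * d + 2))} : Finset (ZMod (2 * d + 2)))})

/-!
Measured clockwise from `p`, vertices become positions `0, …, 2d + 1`, two chords cross exactly
when their positions interleave (`Linked`), and `delV` acts by the weakly increasing map
`delPos`, which merges only `p, p + 1` and `p̄, p̄ + 1`. Hence a crossing of two edges of `T ∖ p`
pulls back to a crossing in `T`, and `delV` commutes with the central symmetry. For maximality,
a chord `{a, b}` of the `2d`-gon crossing no edge of `T ∖ p` has one, two or four lifts; were none
of them in `T`, each would be crossed by an edge of `T` that stops crossing it only after the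
contraction, so that one of its endpoints merges with an endpoint of the lift. Comparing these
blocking edges for neighbouring lifts produces two crossing edges of `T`.
-/

/-- Chords `{a, b}` and `{c, d}` between points `0, 1, 2, …` placed in this order on a circle
cross. -/
def Linked (a b c d : ℕ) : Prop :=
  ((a < c ∧ c < b ∨ b < c ∧ c < a) ∧ (d < a ∧ d < b ∨ a < d ∧ b < d)) ∨
  ((a < d ∧ d < b ∨ b < d ∧ d < a) ∧ (c < a ∧ c < b ∨ a < c ∧ b < c))

namespace Linked

variable {a b c d : ℕ}

lemma symm (h : Linked a b c d) : Linked c d a b := by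
  unfold Linked at *; omega

lemma swap (h : Linked a b c d) : Linked b a c d := by
  unfold Linked at *; omega

lemma swap_right (h : Linked a b c d) : Linked a b d c := by
  unfold Linked at *; omega

lemma of_map {f : ℕ → ℕ} (hf : Monotone f) (h : Linked (f a) (f b) (f c) (f d)) :
    Linked a b c d :=
  have r := fun {x y : ℕ} => @Monotone.reflect_lt _ _ _ _ f hf x y
  h.imp (And.imp (Or.imp (And.imp r r) (And.imp r r)) (Or.imp (And.imp r r) (And.imp r r)))
    (And.imp (Or.imp (And.imp r r) (And.imp r r)) (Or.imp (And.imp r r) (And.imp r r)))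

lemma map {f : ℕ → ℕ} (hf : Monotone f) (hac : f a ≠ f c) (hbc : f b ≠ f c)
    (had : f a ≠ f d) (hbd : f b ≠ f d) (h : Linked a b c d) :
    Linked (f a) (f b) (f c) (f d) :=
  have k := fun {x y : ℕ} (hne : f x ≠ f y) (hlt : x < y) => (hf hlt.le).lt_of_ne hne
  h.imp
    (And.imp (Or.imp (And.imp (k hac) (k hbc.symm)) (And.imp (k hbc) (k hac.symm)))
      (Or.imp (And.imp (k had.symm) (k hbd.symm)) (And.imp (k had) (k hbd))))
    (And.imp (Or.imp (And.imp (k had) (k hbd.symm)) (And.imp (k hbd) (k had.symm)))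
      (Or.imp (And.imp (k hac.symm) (k hbc.symm)) (And.imp (k hac) (k hbc))))

end Linked

lemma finset_pair_eq_pair_iff {α : Type*} [DecidableEq α] {x y z w : α} :
    ({x, y} : Finset α) = {z, w} ↔ x = z ∧ y = w ∨ x = w ∧ y = z := by
  rw [← Finset.coe_inj, Finset.coe_pair, Finset.coe_pair, Set.pair_eq_pair_iff]

lemma crosses_pair_iff {n : ℕ} (x y z w : ZMod n) :
    Crosses n {x, y} {z, w} ↔ Sbtw n x z y ∧ Sbtw n y w x ∨ Sbtw n x w y ∧ Sbtw n y z x := by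
  constructor
  · rintro ⟨a, b, c, e, hab, hce, hs⟩
    rw [finset_pair_eq_pair_iff] at hab hce
    rcases hab with ⟨rfl, rfl⟩ | ⟨rfl, rfl⟩ <;> rcases hce with ⟨rfl, rfl⟩ | ⟨rfl, rfl⟩ <;>
      tauto
  · rintro (h | h)
    · exact ⟨x, y, z, w, rfl, rfl, h⟩
    · exact ⟨x, y, w, z, rfl, Finset.pair_comm z w, h⟩

lemma sbtw_sub_iff {n : ℕ} (p x y z : ZMod n) :
    Sbtw n (x - p) (y - p) (z - p) ↔ Sbtw n x y z := by
  simp only [Sbtw, sub_sub_sub_cancel_right]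

lemma val_sub_eq_ite {n : ℕ} [NeZero n] (x y : ZMod n) :
    (y - x).val = if x.val ≤ y.val then y.val - x.val else y.val + n - x.val := by
  split_ifs with h
  · exact ZMod.val_sub h
  · have hle : n ≤ (y - x).val + x.val := by
      by_contra! hlt
      have := ZMod.val_add_of_lt hlt
      rw [sub_add_cancel] at this
      omega
    have := ZMod.val_add_val_of_le hle
    rw [sub_add_cancel] at this
    omega

lemma crosses_iff_linked {n : ℕ} [NeZero n] (x y z w : ZMod n) :
    Crosses n {x, y} {z, w} ↔ Linked x.val y.val z.val w.val := by
  have := ZMod.val_lt x; have := ZMod.val_lt y; have := ZMod.val_lt z; have := ZMod.val_lt w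
  simp only [crosses_pair_iff, Sbtw, val_sub_eq_ite, Linked]
  split_ifs <;> omega

lemma crosses_iff_linked_sub {n : ℕ} [NeZero n] (p x y z w : ZMod n) :
    Crosses n {x, y} {z, w} ↔ Linked (x - p).val (y - p).val (z - p).val (w - p).val := by
  rw [← crosses_iff_linked, crosses_pair_iff, crosses_pair_iff]
  simp only [sbtw_sub_iff]

/-- `delV` on positions measured clockwise from `p`; `delPos d 0 = 0` by truncated
subtraction, so `p, p + 1` and `p̄, p̄ + 1` (positions `0, 1` and `d + 1, d + 2`) merge. -/
def delPos (d s : ℕ) : ℕ := if s ≤ d + 1 then s - 1 else s - 2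

lemma delPos_mono (d : ℕ) : Monotone (delPos d) := by
  intro s t h; unfold delPos; split_ifs <;> omega

lemma delPos_lt {d s : ℕ} (hd : d ≠ 0) (hs : s < 2 * d + 2) : delPos d s < 2 * d := by
  unfold delPos; split_ifs <;> omega

def Merged (d x y : ℕ) : Prop := x ≠ y ∧ delPos d x = delPos d y

lemma Merged.positions {d x y : ℕ} (hd : d ≠ 0) (h : Merged d x y) :
    x ≠ y ∧ (x ≤ 1 ∧ y ≤ 1 ∨ d + 1 ≤ x ∧ x ≤ d + 2 ∧ d + 1 ≤ y ∧ y ≤ d + 2) := by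
  obtain ⟨hne, h⟩ := h
  unfold delPos at h; split_ifs at h <;> omega

lemma linked_of_linked_succ {s t u u' : ℕ} (h : Linked s t (s + 1) u)
    (h' : Linked (s + 1) t s u') : Linked (s + 1) u s u' := by
  unfold Linked at *; omega

lemma merged_of_linked_of_not_linked {d s t z w : ℕ} (h : Linked s t z w)
    (h' : ¬Linked (delPos d s) (delPos d t) (delPos d z) (delPos d w)) :
    Merged d s z ∨ Merged d t z ∨ Merged d s w ∨ Merged d t w := by
  have hne : s ≠ z ∧ t ≠ z ∧ s ≠ w ∧ t ≠ w := by unfold Linked at h; omega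
  by_contra! hm
  simp only [Merged, not_and] at hm
  exact h' (h.map (delPos_mono d) (hm.1 hne.1) (hm.2.1 hne.2.1) (hm.2.2.1 hne.2.2.1)
    (hm.2.2.2 hne.2.2.2))

lemma exists_delPos_eq {d γ : ℕ} (hγ : γ < 2 * d) :
    ∃ s, s < 2 * d + 2 ∧ delPos d s = γ ∧ (γ ≠ 0 → γ ≠ d → s ≠ 0 ∧ s ≠ 1 ∧ s ≠ d + 1 ∧ s ≠ d + 2) :=
  ⟨if γ ≤ d then γ + 1 else γ + 2, by split_ifs <;> omega,
    by unfold delPos; split_ifs <;> omega, by split_ifs <;> omega⟩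

/-- The diameter case of `false_of_forall_lift_blocked`: blockers of the lifts `{1, d + 1}` and
`{0, d + 2}` avoid each other only in two configurations, and each of these is crossed by
every blocker of `{0, d + 1}`, respectively of `{1, d + 2}`. -/
lemma false_of_diameter_lifts_blocked {d : ℕ} (hd : d ≠ 0) {S : ℕ → ℕ → Prop}
    (hS : ∀ z w z' w', S z w → S z' w' → ¬Linked z w z' w')
    (hblock : ∀ s t, (s = 0 ∨ s = 1) → (t = d + 1 ∨ t = d + 2) →
      ∃ c u, S c u ∧ Linked s t c u ∧ (Merged d s c ∨ Merged d t c)) : False := by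
  have merged := fun {x y : ℕ} (h : Merged d x y) => h.positions hd
  obtain ⟨c₁, u₁, hS₁, hL₁, hm₁⟩ := hblock 1 (d + 1) (by omega) (by omega)
  obtain ⟨c₂, u₂, hS₂, hL₂, hm₂⟩ := hblock 0 (d + 2) (by omega) (by omega)
  obtain ⟨c₃, u₃, hS₃, hL₃, hm₃⟩ := hblock 0 (d + 1) (by omega) (by omega)
  obtain ⟨c₄, u₄, hS₄, hL₄, hm₄⟩ := hblock 1 (d + 2) (by omega) (by omega)
  have h₁ : (c₁ = 0 ∨ c₁ = d + 2) ∧ 2 ≤ u₁ ∧ u₁ ≤ d := by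
    unfold Linked at hL₁; rcases hm₁ with h | h <;> have := merged h <;> omega
  have h₂ : (c₂ = 1 ∨ c₂ = d + 1) ∧ d + 3 ≤ u₂ := by
    unfold Linked at hL₂; rcases hm₂ with h | h <;> have := merged h <;> omega
  have h₃ : c₃ = 1 ∧ d + 2 ≤ u₃ ∨ c₃ = d + 2 ∧ 1 ≤ u₃ ∧ u₃ ≤ d := by
    unfold Linked at hL₃; rcases hm₃ with h | h <;> have := merged h <;> omega
  have h₄ : c₄ = 0 ∧ 2 ≤ u₄ ∧ u₄ ≤ d + 1 ∨ c₄ = d + 1 ∧ (u₄ = 0 ∨ d + 3 ≤ u₄) := by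
    unfold Linked at hL₄; rcases hm₄ with h | h <;> have := merged h <;> omega
  rcases h₁ with ⟨rfl | rfl, hu₁⟩ <;> rcases h₂ with ⟨rfl | rfl, hu₂⟩
  · exact hS _ _ _ _ hS₁ hS₂ (by unfold Linked; omega)
  · rcases h₃ with ⟨rfl, hu₃⟩ | ⟨rfl, hu₃⟩
    · exact hS _ _ _ _ hS₁ hS₃ (by unfold Linked; omega)
    · exact hS _ _ _ _ hS₂ hS₃ (by unfold Linked; omega)
  · rcases h₄ with ⟨rfl, hu₄⟩ | ⟨rfl, hu₄⟩
    · exact hS _ _ _ _ hS₂ hS₄ (by unfold Linked; omega)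
    · exact hS _ _ _ _ hS₁ hS₄ (by unfold Linked; omega)
  · exact hS _ _ _ _ hS₁ hS₂ (by unfold Linked; omega)

/-- On positions, `S` stands for the edges of `T` and `{α, β}` for a chord of the `2d`-gon. -/
lemma false_of_forall_lift_blocked {d α β : ℕ} (hα : α < 2 * d) (hβ : β < 2 * d) (hαβ : α ≠ β)
    {S : ℕ → ℕ → Prop} (hS : ∀ z w z' w', S z w → S z' w' → ¬Linked z w z' w')
    (hblock : ∀ s t, s < 2 * d + 2 → t < 2 * d + 2 → delPos d s = α → delPos d t = β →
      ∃ c u, S c u ∧ Linked s t c u ∧ (Merged d s c ∨ Merged d t c)) : False := by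
  wlog hβ' : (β ≠ 0 ∧ β ≠ d) ∨ (α = 0 ∧ β = d) generalizing α β
  · refine this hβ hα hαβ.symm (fun s t hs ht hsβ htα => ?_) (by omega)
    obtain ⟨c, u, hScu, hL, hm⟩ := hblock t s ht hs htα hsβ
    exact ⟨c, u, hScu, hL.swap, hm.symm⟩
  have hd : d ≠ 0 := by omega
  have merged := fun {x y : ℕ} (h : Merged d x y) => h.positions hd
  rcases hβ' with ⟨hβ0, hβd⟩ | ⟨rfl, rfl⟩
  · obtain ⟨t, ht, htβ, ht'⟩ := exists_delPos_eq hβ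
    specialize ht' hβ0 hβd
    by_cases hα' : α = 0 ∨ α = d
    · obtain ⟨s, hs, hsα, hs'⟩ :
          ∃ s, s + 1 < 2 * d + 2 ∧ delPos d s = α ∧ (s = 0 ∨ s = d + 1) := by
        rcases hα' with h | h
        · exact ⟨0, by omega, by simp [delPos, h], by omega⟩
        · exact ⟨d + 1, by omega, by simp [delPos, h], by omega⟩
      have hsα' : delPos d (s + 1) = α := by
        rw [← hsα]; unfold delPos; split_ifs <;> omega
      obtain ⟨c, u, hS₁, hL₁, hm₁⟩ := hblock s t (by omega) ht hsα htβ
      obtain ⟨c', u', hS₂, hL₂, hm₂⟩ := hblock (s + 1) t hs ht hsα' htβ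
      obtain rfl : c = s + 1 := by rcases hm₁ with h | h <;> have := merged h <;> omega
      obtain rfl : c' = s := by rcases hm₂ with h | h <;> have := merged h <;> omega
      exact hS _ _ _ _ hS₁ hS₂ (linked_of_linked_succ hL₁ hL₂)
    · obtain ⟨s, hs, hsα, hs'⟩ := exists_delPos_eq hα
      specialize hs' (by omega) (by omega)
      obtain ⟨c, u, -, -, hm⟩ := hblock s t hs ht hsα htβ
      rcases hm with h | h <;> have := merged h <;> omega
  · exact false_of_diameter_lifts_blocked hd hS fun s t hs ht =>
      hblock s t (by omega) (by omega) (by unfold delPos; split_ifs <;> omega)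
        (by unfold delPos; split_ifs <;> omega)

instance neZero_two_mul_add_two (d : ℕ) : NeZero (2 * d + 2) := ⟨by omega⟩

lemma opp_two_mul_add_two (d : ℕ) (x : ZMod (2 * d + 2)) :
    opp (2 * d + 2) x = x + (d + 1 : ℕ) := by
  rw [opp, show (2 * d + 2) / 2 = d + 1 by omega]

lemma opp_two_mul (d : ℕ) (x : ZMod (2 * d)) : opp (2 * d) x = x + (d : ℕ) := by
  rw [opp, show 2 * d / 2 = d by omega]

lemma sub_val_of_eq_add {n k : ℕ} [NeZero n] {p x : ZMod n} (hk : k < n) (h : x = p + k) :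
    (x - p).val = k := by
  rw [h, add_sub_cancel_left, ZMod.val_cast_of_lt hk]

lemma val_add_natCast {n k : ℕ} [NeZero n] (y : ZMod n) (hk : k < n) :
    (y + k).val = if y.val + k < n then y.val + k else y.val + k - n := by
  have := ZMod.val_lt y
  rw [ZMod.val_add, ZMod.val_cast_of_lt hk]
  split_ifs with h
  · exact Nat.mod_eq_of_lt h
  · rw [Nat.mod_eq_sub_mod (by omega), Nat.mod_eq_of_lt (by omega)]

lemma eq_add_sub_val {n : ℕ} [NeZero n] (p x : ZMod n) : x = p + ((x - p).val : ℕ) := by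
  rw [ZMod.natCast_zmod_val, add_sub_cancel]

lemma sub_val_inj {n : ℕ} [NeZero n] {p x y : ZMod n} : (x - p).val = (y - p).val ↔ x = y :=
  (ZMod.val_injective n).eq_iff.trans sub_left_inj

section Deletion

variable {d : ℕ} [NeZero d]

lemma delV_val (p x : ZMod (2 * d + 2)) : (delV d p x).val = delPos d (x - p).val :=
  ZMod.val_cast_of_lt (delPos_lt (NeZero.ne d) (ZMod.val_lt _))

lemma delV_eq_delV_iff_delPos {p x y : ZMod (2 * d + 2)} :
    delV d p x = delV d p y ↔ delPos d (x - p).val = delPos d (y - p).val := by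
  rw [← (ZMod.val_injective _).eq_iff, delV_val, delV_val]

lemma delV_opp (p x : ZMod (2 * d + 2)) :
    delV d p (opp (2 * d + 2) x) = opp (2 * d) (delV d p x) := by
  apply ZMod.val_injective
  have := NeZero.pos d
  have := ZMod.val_lt (x - p)
  rw [delV_val, opp_two_mul_add_two, add_sub_right_comm, val_add_natCast _ (by omega), opp_two_mul,
    val_add_natCast _ (by omega), delV_val]
  unfold delPos
  split_ifs <;> omega

lemma sub_val_merged_vertices (p : ZMod (2 * d + 2)) :
    (p - p).val = 0 ∧ (p + 1 - p).val = 1 ∧ (opp (2 * d + 2) p - p).val = d + 1 ∧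
      (opp (2 * d + 2) p + 1 - p).val = d + 2 := by
  have := NeZero.pos d
  refine ⟨by simp, sub_val_of_eq_add (k := 1) (by omega) (by simp),
    sub_val_of_eq_add (by omega) (opp_two_mul_add_two d p), sub_val_of_eq_add (by omega) ?_⟩
  rw [opp_two_mul_add_two]; push_cast; ring

variable {p : ZMod (2 * d + 2)} {T : Set (Finset (ZMod (2 * d + 2)))}

lemma delV_eq_delV_iff {x y : ZMod (2 * d + 2)} (hxy : x ≠ y) :
    delV d p x = delV d p y ↔ ({x, y} : Finset (ZMod (2 * d + 2))) = {p, p + 1} ∨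
      ({x, y} : Finset (ZMod (2 * d + 2))) = {opp (2 * d + 2) p, opp (2 * d + 2) p + 1} := by
  obtain ⟨h0, h1, h2, h3⟩ := sub_val_merged_vertices (d := d) p
  rw [delV_eq_delV_iff_delPos]
  constructor
  · intro h
    have hc := Merged.positions (NeZero.ne d) ⟨fun h' => hxy (sub_val_inj.1 h'), h⟩
    simp only [finset_pair_eq_pair_iff, ← sub_val_inj (p := p), h0, h1, h2, h3]
    omega
  · rintro (h | h) <;> rw [finset_pair_eq_pair_iff] at h <;>
      rcases h with ⟨rfl, rfl⟩ | ⟨rfl, rfl⟩ <;> simp only [h0, h1, h2, h3, delPos] <;>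
      split_ifs <;> omega

lemma mem_delT_of_mem {x y : ZMod (2 * d + 2)} (h : ({x, y} : Finset _) ∈ T)
    (hne : delV d p x ≠ delV d p y) : ({delV d p x, delV d p y} : Finset _) ∈ delT d p T := by
  have hxy : x ≠ y := fun h => hne (by rw [h])
  refine ⟨{x, y}, ⟨h, fun hr => hne ((delV_eq_delV_iff hxy).2 hr)⟩, ?_⟩
  simp [Finset.image_insert]

lemma exists_of_mem_delT (hT : ∀ e ∈ T, IsEdge (2 * d + 2) e) {e : Finset (ZMod (2 * d))}
    (he : e ∈ delT d p T) :
    ∃ x y, ({x, y} : Finset _) ∈ T ∧ delV d p x ≠ delV d p y ∧ e = {delV d p x, delV d p y} := by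
  obtain ⟨E, ⟨hE, hR⟩, rfl⟩ := he
  obtain ⟨x, y, hxy, rfl⟩ := hT E hE
  exact ⟨x, y, hE, fun h => hR ((delV_eq_delV_iff hxy).1 h), by simp [Finset.image_insert]⟩

lemma crosses_delV_iff (x y z w : ZMod (2 * d + 2)) :
    Crosses (2 * d) {delV d p x, delV d p y} {delV d p z, delV d p w} ↔
      Linked (delPos d (x - p).val) (delPos d (y - p).val) (delPos d (z - p).val)
        (delPos d (w - p).val) := by
  rw [crosses_iff_linked]
  simp only [delV_val]

lemma isEdge_of_mem_delT (hT : ∀ e ∈ T, IsEdge (2 * d + 2) e) :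
    ∀ e ∈ delT d p T, IsEdge (2 * d) e := by
  intro e he
  obtain ⟨x, y, -, hne, rfl⟩ := exists_of_mem_delT hT he
  exact ⟨_, _, hne, rfl⟩

lemma not_crosses_of_mem_delT (hT : IsTriangulation (2 * d + 2) T) :
    ∀ e ∈ delT d p T, ∀ f ∈ delT d p T, ¬Crosses (2 * d) e f := by
  intro e he f hf hcross
  obtain ⟨x, y, hxy, -, rfl⟩ := exists_of_mem_delT hT.1 he
  obtain ⟨z, w, hzw, -, rfl⟩ := exists_of_mem_delT hT.1 hf
  rw [crosses_delV_iff] at hcross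
  exact hT.2.1 _ hxy _ hzw ((crosses_iff_linked_sub p _ _ _ _).2 (hcross.of_map (delPos_mono d)))

lemma isCS_delT (hT : IsCST (2 * d + 2) T) : IsCS (2 * d) (delT d p T) := by
  intro a b hab
  obtain ⟨x, y, hxy, hne, he⟩ := exists_of_mem_delT hT.1.1 hab
  have hne' : delV d p (opp _ x) ≠ delV d p (opp _ y) := by
    rw [delV_opp, delV_opp]
    exact fun h => hne (add_right_cancel h)
  have h := mem_delT_of_mem (hT.2 x y hxy) hne'
  rw [delV_opp, delV_opp] at h
  rcases finset_pair_eq_pair_iff.1 he with ⟨rfl, rfl⟩ | ⟨rfl, rfl⟩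
  · exact h
  · rwa [Finset.pair_comm]

lemma exists_blocker (hT : IsTriangulation (2 * d + 2) T) {a b : ZMod (2 * d)} (hab : a ≠ b)
    (hnc : ∀ f ∈ delT d p T, ¬Crosses (2 * d) {a, b} f) (hg : {a, b} ∉ delT d p T)
    {s t : ℕ} (hs : s < 2 * d + 2) (ht : t < 2 * d + 2) (hsa : delPos d s = a.val)
    (htb : delPos d t = b.val) :
    ∃ c u, (c < 2 * d + 2 ∧ u < 2 * d + 2 ∧ ({p + (c : ℕ), p + (u : ℕ)} : Finset _) ∈ T) ∧
      Linked s t c u ∧ (Merged d s c ∨ Merged d t c) := by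
  have hx : (p + (s : ℕ) - p).val = s := sub_val_of_eq_add hs rfl
  have hy : (p + (t : ℕ) - p).val = t := sub_val_of_eq_add ht rfl
  have hdx : delV d p (p + (s : ℕ)) = a := ZMod.val_injective _ (by rw [delV_val, hx, hsa])
  have hdy : delV d p (p + (t : ℕ)) = b := ZMod.val_injective _ (by rw [delV_val, hy, htb])
  have hnot : ({p + (s : ℕ), p + (t : ℕ)} : Finset _) ∉ T := fun h => hg (by
    rw [← hdx, ← hdy]; exact mem_delT_of_mem h (by rwa [hdx, hdy]))
  obtain ⟨f, hf, hcross⟩ : ∃ f ∈ T, Crosses (2 * d + 2) {p + (s : ℕ), p + (t : ℕ)} f ∨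
      Crosses (2 * d + 2) f {p + (s : ℕ), p + (t : ℕ)} := by
    by_contra! h
    exact hnot (hT.2.2 _ ⟨_, _, fun he => hab (by rw [← hdx, ← hdy, he]), rfl⟩ h)
  obtain ⟨z, w, hzw, rfl⟩ := hT.1 f hf
  have hL : Linked s t (z - p).val (w - p).val := by
    rcases hcross with h | h <;> rw [crosses_iff_linked_sub p, hx, hy] at h
    exacts [h, h.symm]
  have hne : delV d p z ≠ delV d p w := by
    rw [Ne, delV_eq_delV_iff_delPos]
    intro h
    have := Merged.positions (NeZero.ne d) ⟨fun h' => hzw (sub_val_inj.1 h'), h⟩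
    unfold Linked at hL
    omega
  have hnl := hnc _ (mem_delT_of_mem hf hne)
  rw [← hdx, ← hdy, crosses_delV_iff, hx, hy] at hnl
  have hT' : ({p + ((z - p).val : ℕ), p + ((w - p).val : ℕ)} : Finset _) ∈ T := by
    rwa [← eq_add_sub_val, ← eq_add_sub_val]
  rcases merged_of_linked_of_not_linked hL hnl with h | h | h | h
  · exact ⟨_, _, ⟨ZMod.val_lt _, ZMod.val_lt _, hT'⟩, hL, Or.inl h⟩
  · exact ⟨_, _, ⟨ZMod.val_lt _, ZMod.val_lt _, hT'⟩, hL, Or.inr h⟩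
  · exact ⟨_, _, ⟨ZMod.val_lt _, ZMod.val_lt _, by rwa [Finset.pair_comm]⟩, hL.swap_right,
      Or.inl h⟩
  · exact ⟨_, _, ⟨ZMod.val_lt _, ZMod.val_lt _, by rwa [Finset.pair_comm]⟩, hL.swap_right,
      Or.inr h⟩

lemma mem_delT_of_forall_not_crosses (hT : IsTriangulation (2 * d + 2) T)
    (e : Finset (ZMod (2 * d))) (he : IsEdge (2 * d) e)
    (hnc : ∀ f ∈ delT d p T, ¬Crosses (2 * d) e f ∧ ¬Crosses (2 * d) f e) : e ∈ delT d p T := by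
  obtain ⟨a, b, hab, rfl⟩ := he
  by_contra hg
  refine false_of_forall_lift_blocked (ZMod.val_lt a) (ZMod.val_lt b)
    (fun h => hab (ZMod.val_injective _ h)) ?_
    (fun s t hs ht hsa htb => exists_blocker hT hab (fun f hf => (hnc f hf).1) hg hs ht hsa htb)
  rintro z w z' w' ⟨hz, hw, h⟩ ⟨hz', hw', h'⟩ hL
  refine hT.2.1 _ h _ h' ?_
  rwa [crosses_iff_linked_sub p, sub_val_of_eq_add hz rfl, sub_val_of_eq_add hw rfl,
    sub_val_of_eq_add hz' rfl, sub_val_of_eq_add hw' rfl]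

end Deletion

/-- Proposition on deletions: for `d ≥ 2`, deleting any vertex `p`
from a centrally symmetric triangulation of a convex polygon with `2d+2` vertices yields
a centrally symmetric triangulation of a convex polygon with `2d` vertices. -/
theorem deletion_is_cs_triangulation (d : ℕ) (hd : 2 ≤ d)
    (T : Set (Finset (ZMod (2 * d + 2)))) (hT : IsCST (2 * d + 2) T)
    (p : ZMod (2 * d + 2)) :
    IsCST (2 * d) (delT d p T) := by
  have : NeZero d := ⟨by omega⟩
  exact ⟨⟨isEdge_of_mem_delT hT.1.1, not_crosses_of_mem_delT hT.1,
    mem_delT_of_forall_not_crosses hT.1⟩, isCS_delT hT⟩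

end Cyclo
end

section
/- Let d ≥ 1 and let x be an integer with 1 ≤ x ≤ d. Let U⁻ be the centrally symmetric triangulation of the (2d+2)-gon whose interior edges are {0,0̄}, the edges {0,v} for 2 ≤ v ≤ d, and the edges {0̄,v̄} for 2 ≤ v ≤ d; and let U⁺ be the centrally symmetric triangulation whose interior edges are the diagonal {x,x̄}, the edges {0,v} for v ∈ {2,…,x} ∪ {x̄, x̄+1, …, 2d}, and the centrally symmetric copies {0̄,v̄} of the latter. Then δ(U⁺, U⁻) ≤ d − x + 1. -/
namespace SimpleGraph

lemma exists_walk_length_eq_of_adj_succ {V : Type*} {G : SimpleGraph V}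
    (f : ℕ → V) {a b : ℕ} (hab : a ≤ b) (h : ∀ i, a ≤ i → i < b → G.Adj (f i) (f (i + 1))) :
    ∃ p : G.Walk (f a) (f b), p.length = b - a := by
  induction b, hab using Nat.le_induction with
  | base => exact ⟨.nil, by rw [Walk.length_nil, Nat.sub_self]⟩
  | succ b hab ih =>
    obtain ⟨p, hp⟩ := ih fun i hi hib => h i hi (by omega)
    exact ⟨p.concat (h b hab (by omega)), by rw [Walk.length_concat, hp]; omega⟩

end SimpleGraph

namespace Cyclo

lemma natCast_inj_of_lt {n a b : ℕ} (ha : a < n) (hb : b < n) :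
    (a : ZMod n) = b ↔ a = b := by
  rw [ZMod.natCast_eq_natCast_iff', Nat.mod_eq_of_lt ha, Nat.mod_eq_of_lt hb]

lemma val_natCast_sub_natCast {n a b : ℕ} (ha : a < n) (hb : b < n) :
    ((b : ZMod n) - a).val = if a ≤ b then b - a else b + n - a := by
  have : NeZero n := ⟨by omega⟩
  have hcast : (b : ZMod n) - a = ((b + (n - a) : ℕ) : ZMod n) := by
    push_cast [Nat.cast_sub ha.le, ZMod.natCast_self]
    ring
  rw [hcast, ZMod.val_natCast]
  split_ifs
  · rw [show b + (n - a) = b - a + n by omega, Nat.add_mod_right, Nat.mod_eq_of_lt (by omega)]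
  · rw [Nat.mod_eq_of_lt (by omega)]
    omega

lemma sbtw_natCast_iff {n a b c : ℕ} (ha : a < n) (hb : b < n) (hc : c < n) :
    Sbtw n a b c ↔ (a < b ∧ b < c) ∨ (b < c ∧ c < a) ∨ (c < a ∧ a < b) := by
  rw [Sbtw, val_natCast_sub_natCast ha hb, val_natCast_sub_natCast ha hc]
  split_ifs <;> omega

/-- Crossing of the edges `{a, b}` and `{c, e}`, meaningful for sorted labels `a < b`, `c < e`. -/
def NatCrosses (a b c e : ℕ) : Prop :=
  (a < c ∧ c < b ∧ b < e) ∨ (c < a ∧ a < e ∧ e < b)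

lemma crosses_natCast_iff {n a b c e : ℕ} (hab : a < b) (hb : b < n) (hce : c < e)
    (he : e < n) :
    Crosses n {(a : ZMod n), (b : ZMod n)} {(c : ZMod n), (e : ZMod n)} ↔ NatCrosses a b c e := by
  have ha : a < n := hab.trans hb
  have hc : c < n := hce.trans he
  constructor
  · rintro ⟨p, q, r, s, hpq, hrs, h₁, h₂⟩
    rw [← Finset.coe_inj, Finset.coe_pair, Finset.coe_pair, Set.pair_eq_pair_iff] at hpq hrs
    rcases hpq with ⟨rfl, rfl⟩ | ⟨rfl, rfl⟩ <;> rcases hrs with ⟨rfl, rfl⟩ | ⟨rfl, rfl⟩ <;>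
      simp only [sbtw_natCast_iff, *] at h₁ h₂ <;> unfold NatCrosses <;> omega
  · rintro (h | h)
    · exact ⟨a, b, c, e, rfl, rfl, (sbtw_natCast_iff ha hc hb).2 (by omega),
        (sbtw_natCast_iff hb he ha).2 (by omega)⟩
    · exact ⟨a, b, e, c, rfl, Finset.pair_comm _ _, (sbtw_natCast_iff ha he hb).2 (by omega),
        (sbtw_natCast_iff hb hc ha).2 (by omega)⟩

def natEdges (n : ℕ) (Q : ℕ → ℕ → Prop) : Set (Finset (ZMod n)) :=
  {e | ∃ a b, a < b ∧ b < n ∧ Q a b ∧ e = {(a : ZMod n), (b : ZMod n)}}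

section natEdges

variable {n : ℕ} {Q R : ℕ → ℕ → Prop}

lemma natCast_pair_inj {a b c e : ℕ} (hab : a < b) (hb : b < n) (hce : c < e) (he : e < n) :
    ({(a : ZMod n), (b : ZMod n)} : Finset (ZMod n)) = {(c : ZMod n), (e : ZMod n)} ↔
      a = c ∧ b = e := by
  rw [← Finset.coe_inj, Finset.coe_pair, Finset.coe_pair, Set.pair_eq_pair_iff,
    natCast_inj_of_lt (hab.trans hb) (hce.trans he), natCast_inj_of_lt hb he,
    natCast_inj_of_lt (hab.trans hb) he, natCast_inj_of_lt hb (hce.trans he)]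
  omega

lemma pair_mem_natEdges_iff {a b : ℕ} (hab : a < b) (hb : b < n) :
    {(a : ZMod n), (b : ZMod n)} ∈ natEdges n Q ↔ Q a b := by
  constructor
  · rintro ⟨c, e, hce, he, hQ, heq⟩
    obtain ⟨rfl, rfl⟩ := (natCast_pair_inj hab hb hce he).1 heq
    exact hQ
  · exact fun hQ => ⟨a, b, hab, hb, hQ, rfl⟩

lemma pair_mem_natEdges_iff' {a b : ℕ} (hab : a ≠ b) (ha : a < n) (hb : b < n) :
    {(a : ZMod n), (b : ZMod n)} ∈ natEdges n Q ↔ Q (min a b) (max a b) := by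
  rcases Nat.lt_or_gt_of_ne hab with h | h
  · rw [pair_mem_natEdges_iff h hb, min_eq_left h.le, max_eq_right h.le]
  · rw [Finset.pair_comm, pair_mem_natEdges_iff h ha, min_eq_right h.le, max_eq_left h.le]

lemma natCast_pair_eq_min_max (a b : ℕ) :
    ({(a : ZMod n), (b : ZMod n)} : Finset (ZMod n)) =
      {((min a b : ℕ) : ZMod n), ((max a b : ℕ) : ZMod n)} := by
  rcases le_total a b with h | h
  · rw [min_eq_left h, max_eq_right h]
  · rw [min_eq_right h, max_eq_left h, Finset.pair_comm]

lemma exists_natCast_pair [NeZero n] {e : Finset (ZMod n)} (he : IsEdge n e) :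
    ∃ a b, a < b ∧ b < n ∧ e = {(a : ZMod n), (b : ZMod n)} := by
  obtain ⟨x, y, hxy, rfl⟩ := he
  have hval : x.val ≠ y.val := fun h => hxy (ZMod.val_injective n h)
  refine ⟨min x.val y.val, max x.val y.val, by omega, max_lt (ZMod.val_lt x) (ZMod.val_lt y), ?_⟩
  rw [← natCast_pair_eq_min_max, ZMod.natCast_zmod_val, ZMod.natCast_zmod_val]

lemma natEdges_mono (h : ∀ a b, a < b → b < n → Q a b → R a b) :
    natEdges n Q ⊆ natEdges n R := by
  rintro _ ⟨a, b, hab, hb, hQ, rfl⟩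
  exact ⟨a, b, hab, hb, h a b hab hb hQ, rfl⟩

lemma natEdges_congr (h : ∀ a b, a < b → b < n → (Q a b ↔ R a b)) :
    natEdges n Q = natEdges n R :=
  (natEdges_mono fun a b hab hb => (h a b hab hb).1).antisymm
    (natEdges_mono fun a b hab hb => (h a b hab hb).2)

lemma natEdges_union :
    natEdges n Q ∪ natEdges n R = natEdges n (fun a b => Q a b ∨ R a b) := by
  ext e
  constructor
  · rintro (⟨a, b, hab, hb, hQ, rfl⟩ | ⟨a, b, hab, hb, hR, rfl⟩)
    exacts [⟨a, b, hab, hb, Or.inl hQ, rfl⟩, ⟨a, b, hab, hb, Or.inr hR, rfl⟩]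
  · rintro ⟨a, b, hab, hb, hQ | hR, rfl⟩
    exacts [Or.inl ⟨a, b, hab, hb, hQ, rfl⟩, Or.inr ⟨a, b, hab, hb, hR, rfl⟩]

lemma natEdges_diff :
    natEdges n Q \ natEdges n R = natEdges n (fun a b => Q a b ∧ ¬ R a b) := by
  ext e
  constructor
  · rintro ⟨⟨a, b, hab, hb, hQ, rfl⟩, hR⟩
    exact ⟨a, b, hab, hb, ⟨hQ, fun h => hR ⟨a, b, hab, hb, h, rfl⟩⟩, rfl⟩
  · rintro ⟨a, b, hab, hb, ⟨hQ, hR⟩, rfl⟩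
    exact ⟨⟨a, b, hab, hb, hQ, rfl⟩, (pair_mem_natEdges_iff hab hb).not.2 hR⟩

lemma natEdges_singleton {a b : ℕ} (hab : a ≠ b) (ha : a < n) (hb : b < n) :
    ({{(a : ZMod n), (b : ZMod n)}} : Set (Finset (ZMod n))) =
      natEdges n (fun p q => p = min a b ∧ q = max a b) := by
  rw [natCast_pair_eq_min_max a]
  ext f
  constructor
  · rintro rfl
    exact (pair_mem_natEdges_iff (by omega) (by omega)).2 ⟨rfl, rfl⟩
  · rintro ⟨p, q, -, -, ⟨rfl, rfl⟩, rfl⟩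
    rfl

lemma setOf_zero_pair_eq_natEdges {C : ℕ → Prop} (hC : ∀ v, C v → 0 < v ∧ v < n) :
    {e | ∃ v, C v ∧ e = {(0 : ZMod n), (v : ZMod n)}} =
      natEdges n (fun a b => a = 0 ∧ C b) := by
  ext e
  constructor
  · rintro ⟨v, hv, rfl⟩
    exact ⟨0, v, (hC v hv).1, (hC v hv).2, ⟨rfl, hv⟩, by rw [Nat.cast_zero]⟩
  · rintro ⟨a, b, -, -, ⟨rfl, hb⟩, rfl⟩
    exact ⟨b, hb, by rw [Nat.cast_zero]⟩

lemma boundarySet_eq (hn : 2 ≤ n) :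
    boundarySet n = natEdges n (fun a b => b = a + 1 ∨ (a = 0 ∧ b = n - 1)) := by
  have : NeZero n := ⟨by omega⟩
  have hlast : ((n - 1 : ℕ) : ZMod n) + 1 = ((0 : ℕ) : ZMod n) := by
    rw [← Nat.cast_succ, Nat.succ_eq_add_one, Nat.sub_add_cancel (by omega), ZMod.natCast_self,
      Nat.cast_zero]
  ext e
  constructor
  · rintro ⟨x, rfl⟩
    rw [← ZMod.natCast_zmod_val x]
    have hx := ZMod.val_lt x
    rcases Nat.lt_or_ge (x.val + 1) n with h | h
    · rw [← Nat.cast_succ]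
      exact (pair_mem_natEdges_iff (by omega) h).2 (Or.inl rfl)
    · rw [show x.val = n - 1 by omega, hlast, Finset.pair_comm]
      exact (pair_mem_natEdges_iff (by omega) (by omega)).2 (Or.inr ⟨rfl, rfl⟩)
  · rintro ⟨a, b, -, -, rfl | ⟨rfl, rfl⟩, rfl⟩
    · exact ⟨a, by rw [Nat.cast_succ]⟩
    · exact ⟨((n - 1 : ℕ) : ZMod n), by rw [hlast, Finset.pair_comm]⟩

lemma isBoundaryEdge_natCast_iff (hn : 2 ≤ n) {a b : ℕ} (hab : a < b) (hb : b < n) :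
    IsBoundaryEdge n {(a : ZMod n), (b : ZMod n)} ↔ b = a + 1 ∨ (a = 0 ∧ b = n - 1) := by
  change _ ∈ boundarySet n ↔ _
  rw [boundarySet_eq hn, pair_mem_natEdges_iff hab hb]

end natEdges

def oppNat (d a : ℕ) : ℕ := if a ≤ d then a + d + 1 else a - (d + 1)

section opposite

variable {d : ℕ}

lemma opp_natCast (a : ℕ) :
    opp (2 * d + 2) (a : ZMod (2 * d + 2)) = (oppNat d a : ZMod (2 * d + 2)) := by
  rw [opp, show (2 * d + 2) / 2 = d + 1 by omega, oppNat]
  split_ifs with h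
  · push_cast; ring
  · rw [← Nat.cast_add, ZMod.natCast_eq_natCast_iff',
      show a + (d + 1) = a - (d + 1) + (2 * d + 2) by omega, Nat.add_mod_right]

lemma oppNat_lt {a : ℕ} (ha : a < 2 * d + 2) : oppNat d a < 2 * d + 2 := by
  unfold oppNat; split_ifs <;> omega

lemma oppNat_ne_oppNat {a b : ℕ} (ha : a < 2 * d + 2) (hb : b < 2 * d + 2) (hab : a ≠ b) :
    oppNat d a ≠ oppNat d b := by
  unfold oppNat; split_ifs <;> omega

lemma image_opp_natCast_pair (a b : ℕ) :
    ({(a : ZMod (2 * d + 2)), (b : ZMod (2 * d + 2))} : Finset _).image (opp (2 * d + 2)) =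
      {(oppNat d a : ZMod (2 * d + 2)), (oppNat d b : ZMod (2 * d + 2))} := by
  rw [Finset.image_insert, Finset.image_singleton, opp_natCast, opp_natCast]

lemma symCl_natEdges {Q : ℕ → ℕ → Prop} :
    symCl (2 * d + 2) (natEdges (2 * d + 2) Q) = natEdges (2 * d + 2) (fun a b =>
      Q a b ∨ Q (min (oppNat d a) (oppNat d b)) (max (oppNat d a) (oppNat d b))) := by
  rw [symCl, ← natEdges_union]
  congr 1
  ext e
  constructor
  · rintro ⟨_, ⟨a, b, hab, hb, hQ, rfl⟩, rfl⟩
    dsimp only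
    rw [image_opp_natCast_pair,
      pair_mem_natEdges_iff' (oppNat_ne_oppNat (by omega) hb hab.ne) (oppNat_lt (by omega))
        (oppNat_lt hb)]
    convert hQ using 1 <;> unfold oppNat <;> split_ifs <;> omega
  · rintro ⟨a, b, hab, hb, hQ, rfl⟩
    refine ⟨_, (pair_mem_natEdges_iff (min_lt_max.2 (oppNat_ne_oppNat (by omega) hb hab.ne))
      (max_lt (oppNat_lt (by omega)) (oppNat_lt hb))).2 hQ, ?_⟩
    dsimp only
    rw [image_opp_natCast_pair, natCast_pair_eq_min_max]
    congr 3 <;> unfold oppNat <;> split_ifs <;> omega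

end opposite

section triangulation

variable {n : ℕ} {Q : ℕ → ℕ → Prop}

lemma isTriangulation_natEdges [NeZero n]
    (hQ : ∀ a b c e, a < b → b < n → c < e → e < n → Q a b → Q c e → ¬ NatCrosses a b c e)
    (hmax : ∀ a b, a < b → b < n →
      (∀ c e, c < e → e < n → Q c e → ¬ NatCrosses a b c e) → Q a b) :
    IsTriangulation n (natEdges n Q) := by
  refine ⟨?_, ?_, ?_⟩
  · rintro _ ⟨a, b, hab, hb, -, rfl⟩
    exact ⟨a, b, fun h => hab.ne ((natCast_inj_of_lt (hab.trans hb) hb).1 h), rfl⟩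
  · rintro _ ⟨a, b, hab, hb, hQab, rfl⟩ _ ⟨c, e, hce, he, hQce, rfl⟩
    rw [crosses_natCast_iff hab hb hce he]
    exact hQ a b c e hab hb hce he hQab hQce
  · intro f hf hT
    obtain ⟨a, b, hab, hb, rfl⟩ := exists_natCast_pair hf
    refine (pair_mem_natEdges_iff hab hb).2 (hmax a b hab hb fun c e hce he hQce => ?_)
    rw [← crosses_natCast_iff hab hb hce he]
    exact (hT _ ((pair_mem_natEdges_iff hce he).2 hQce)).1

end triangulation

lemma isCS_natEdges {d : ℕ} {Q : ℕ → ℕ → Prop}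
    (hQ : ∀ a b, a < b → b < 2 * d + 2 → Q a b →
      Q (min (oppNat d a) (oppNat d b)) (max (oppNat d a) (oppNat d b))) :
    IsCS (2 * d + 2) (natEdges (2 * d + 2) Q) := by
  intro x y hxy
  obtain ⟨a, b, hab, hb, hQab, hxy⟩ := hxy
  rw [← Finset.image_singleton (opp _) y, ← Finset.image_insert, hxy, image_opp_natCast_pair,
    pair_mem_natEdges_iff' (oppNat_ne_oppNat (by omega) hb hab.ne) (oppNat_lt (by omega))
      (oppNat_lt hb)]
  exact hQ a b hab hb hQab

/-- A flip of the quadrilateral `x, y, x', y'` between triangulations given in sorted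
coordinates; `{p, q}` is written as the sorted pair `(min p q, max p q)`. -/
lemma flipGraph_adj_natEdges {d : ℕ} {Q R : ℕ → ℕ → Prop} {x x' y y' : ℕ}
    (hQ : IsCST (2 * d + 2) (natEdges _ Q)) (hR : IsCST (2 * d + 2) (natEdges _ R))
    (hx : x < 2 * d + 2) (hx' : x' < 2 * d + 2) (hy : y < 2 * d + 2) (hy' : y' < 2 * d + 2)
    (hxx' : x ≠ x') (hxy : x ≠ y) (hyx' : y ≠ x') (hx'y' : x' ≠ y') (hy'x : y' ≠ x)
    (hyy' : y ≠ y')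
    (hinterior : ¬ (max x x' = min x x' + 1 ∨ (min x x' = 0 ∧ max x x' = 2 * d + 1)))
    (hQxx' : Q (min x x') (max x x')) (hQxy : Q (min x y) (max x y))
    (hQyx' : Q (min y x') (max y x')) (hQx'y' : Q (min x' y') (max x' y'))
    (hQy'x : Q (min y' x) (max y' x)) (hQyy' : ¬ Q (min y y') (max y y'))
    (hflip : ∀ a b, a < b → b < 2 * d + 2 → (R a b ↔
      (Q a b ∧ ¬ ((a = min x x' ∧ b = max x x') ∨
        (a = min (oppNat d x) (oppNat d x') ∧ b = max (oppNat d x) (oppNat d x')))) ∨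
      (a = min y y' ∧ b = max y y') ∨
      (a = min (oppNat d y) (oppNat d y') ∧ b = max (oppNat d y) (oppNat d y')))) :
    (flipGraph (2 * d + 2)).Adj (natEdges _ Q) (natEdges _ R) := by
  have hRyy' : {(y : ZMod (2 * d + 2)), (y' : ZMod (2 * d + 2))} ∈ natEdges _ R :=
    (pair_mem_natEdges_iff' hyy' hy hy').2
      ((hflip _ _ (by omega) (max_lt hy hy')).2 (Or.inr (Or.inl ⟨rfl, rfl⟩)))
  refine (SimpleGraph.fromRel_adj _ _ _).2 ⟨fun h => ?_, Or.inl ⟨hQ, hR, x, x', y, y', ?_, ?_⟩⟩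
  · exact hQyy' ((pair_mem_natEdges_iff' hyy' hy hy').1 (h ▸ hRyy'))
  · rw [natCast_pair_eq_min_max, isBoundaryEdge_natCast_iff (by omega) (by omega)
      (max_lt hx hx')]
    omega
  refine ⟨(pair_mem_natEdges_iff' hxx' hx hx').2 hQxx', (pair_mem_natEdges_iff' hxy hx hy).2 hQxy,
    (pair_mem_natEdges_iff' hyx' hy hx').2 hQyx', (pair_mem_natEdges_iff' hx'y' hx' hy').2 hQx'y',
    (pair_mem_natEdges_iff' hy'x hy' hx).2 hQy'x, ?_⟩
  rw [opp_natCast, opp_natCast, opp_natCast, opp_natCast, Set.insert_eq, Set.insert_eq,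
    natEdges_singleton hxx' hx hx',
    natEdges_singleton (oppNat_ne_oppNat hx hx' hxx') (oppNat_lt hx) (oppNat_lt hx'),
    natEdges_singleton hyy' hy hy',
    natEdges_singleton (oppNat_ne_oppNat hy hy' hyy') (oppNat_lt hy) (oppNat_lt hy'),
    natEdges_union, natEdges_union, natEdges_diff, natEdges_union]
  exact natEdges_congr hflip

/-- The sorted edges `a < b` of the double fan: `0` is joined to `1, …, y` and to `ȳ, …, 2d+1`,
`0̄ = d+1` is joined to `y, …, d` and to `d+2, …, ȳ`, and the quadrilateral `0, y, 0̄, ȳ` is cut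
by the diagonal `{u, ū}`, where `u = 0` or `u = y`. -/
def FanEdge (d y u a b : ℕ) : Prop :=
  b = a + 1 ∨ (a = 0 ∧ (b ≤ y ∨ y + d + 1 ≤ b)) ∨ (b = d + 1 ∧ y ≤ a) ∨
    (a = d + 1 ∧ b ≤ y + d + 1) ∨ (a = u ∧ b = u + d + 1)

def doubleFan (d y u : ℕ) : Set (Finset (ZMod (2 * d + 2))) :=
  natEdges (2 * d + 2) (FanEdge d y u)

namespace FanEdge

variable {d y u a b : ℕ}

lemma not_natCrosses {c e : ℕ} (hy : y ≤ d) (hu : u = 0 ∨ u = y) (hab : a < b)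
    (hce : c < e) (hFab : FanEdge d y u a b) (hFce : FanEdge d y u c e) :
    ¬ NatCrosses a b c e := by
  unfold FanEdge at hFab hFce
  unfold NatCrosses
  omega

lemma opp (hy : y ≤ d) (hab : a < b) (hb : b < 2 * d + 2) (h : FanEdge d y u a b) :
    FanEdge d y u (min (oppNat d a) (oppNat d b)) (max (oppNat d a) (oppNat d b)) := by
  unfold FanEdge at h ⊢
  unfold oppNat
  split_ifs <;> omega

lemma of_forall_not_natCrosses (hy : 1 ≤ y) (hyd : y ≤ d) (hu : u = 0 ∨ u = y) (hab : a < b)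
    (hb : b < 2 * d + 2)
    (H : ∀ c e, c < e → e < 2 * d + 2 → FanEdge d y u c e → ¬ NatCrosses a b c e) :
    FanEdge d y u a b := by
  -- every edge outside the fan crosses one of the following fan edges
  have h₁ := H y (d + 1) (by omega) (by omega) (by unfold FanEdge; omega)
  have h₂ := H (d + 1) (y + d + 1) (by omega) (by omega) (by unfold FanEdge; omega)
  have h₃ := H u (u + d + 1) (by omega) (by omega) (by unfold FanEdge; omega)
  have h₄ : a + 1 ≤ y → ¬ NatCrosses a b 0 (a + 1) := fun h =>
    H 0 (a + 1) (by omega) (by omega) (by unfold FanEdge; omega)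
  have h₅ : y + d + 2 ≤ b → ¬ NatCrosses a b 0 (b - 1) := fun h =>
    H 0 (b - 1) (by omega) (by omega) (by unfold FanEdge; omega)
  have h₆ : d + 1 < a → a + 1 < b → b ≤ y + d + 1 → ¬ NatCrosses a b (d + 1) (a + 1) :=
    fun h h' h'' => H (d + 1) (a + 1) (by omega) (by omega) (by unfold FanEdge; omega)
  have h₇ : y ≤ a + 1 → a + 1 < d + 1 → ¬ NatCrosses a b (a + 1) (d + 1) := fun h h' =>
    H (a + 1) (d + 1) (by omega) (by omega) (by unfold FanEdge; omega)
  by_contra hF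
  unfold FanEdge at hF
  rcases Nat.eq_zero_or_pos a with rfl | ha
  · unfold NatCrosses at h₁ h₂ h₃
    omega
  · have hya : y ≤ a := by
      by_contra
      exact h₄ (by omega) (Or.inr ⟨by omega, by omega, by omega⟩)
    have hby : b ≤ y + d + 1 := by
      by_contra
      exact h₅ (by omega) (Or.inr ⟨by omega, by omega, by omega⟩)
    clear h₄ h₅
    unfold NatCrosses at h₁ h₂ h₃ h₆ h₇
    omega

end FanEdge

theorem isCST_doubleFan {d y u : ℕ} (hy : 1 ≤ y) (hyd : y ≤ d) (hu : u = 0 ∨ u = y) :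
    IsCST (2 * d + 2) (doubleFan d y u) :=
  ⟨isTriangulation_natEdges (fun _ _ _ _ hab _ hce _ => FanEdge.not_natCrosses hyd hu hab hce)
      (fun _ _ hab hb => FanEdge.of_forall_not_natCrosses hy hyd hu hab hb),
    isCS_natEdges fun _ _ hab hb => FanEdge.opp hyd hab hb⟩

lemma flipGraph_adj_doubleFan_diagonal {d x : ℕ} (hx : 1 ≤ x) (hxd : x ≤ d) :
    (flipGraph (2 * d + 2)).Adj (doubleFan d x x) (doubleFan d x 0) :=
  flipGraph_adj_natEdges (x := x) (x' := x + d + 1) (y := 0) (y' := d + 1)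
    (isCST_doubleFan hx hxd (Or.inr rfl)) (isCST_doubleFan hx hxd (Or.inl rfl))
    (by omega) (by omega) (by omega) (by omega) (by omega) (by omega) (by omega) (by omega)
    (by omega) (by omega) (by omega) (by unfold FanEdge; omega) (by unfold FanEdge; omega)
    (by unfold FanEdge; omega) (by unfold FanEdge; omega) (by unfold FanEdge; omega)
    (by unfold FanEdge; omega)
    (fun a b hab hb => by unfold FanEdge oppNat; split_ifs <;> omega)

lemma flipGraph_adj_doubleFan_succ {d y : ℕ} (hy : 1 ≤ y) (hyd : y < d) :
    (flipGraph (2 * d + 2)).Adj (doubleFan d y 0) (doubleFan d (y + 1) 0) :=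
  flipGraph_adj_natEdges (x := 0) (x' := y + d + 1) (y := y + d + 2) (y' := d + 1)
    (isCST_doubleFan hy hyd.le (Or.inl rfl)) (isCST_doubleFan (by omega) hyd (Or.inl rfl))
    (by omega) (by omega) (by omega) (by omega) (by omega) (by omega) (by omega) (by omega)
    (by omega) (by omega) (by omega) (by unfold FanEdge; omega) (by unfold FanEdge; omega)
    (by unfold FanEdge; omega) (by unfold FanEdge; omega) (by unfold FanEdge; omega)
    (by unfold FanEdge; omega)
    (fun a b hab hb => by unfold FanEdge oppNat; split_ifs <;> omega)

lemma uminusSet_eq_doubleFan (d : ℕ) : UminusSet d = doubleFan d d 0 := by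
  simp only [UminusSet, ← and_assoc]
  rw [boundarySet_eq (by omega), setOf_zero_pair_eq_natEdges (fun v hv => ⟨by omega, by omega⟩),
    ← Nat.cast_zero (R := ZMod (2 * d + 2)),
    opp_natCast, natEdges_singleton (by unfold oppNat; split_ifs <;> omega) (by omega)
      (oppNat_lt (by omega)),
    natEdges_union, symCl_natEdges, natEdges_union]
  exact natEdges_congr fun a b hab hb => by unfold FanEdge oppNat; split_ifs <;> omega

lemma uplusSet_eq_doubleFan {d x : ℕ} (hx : 1 ≤ x) (hxd : x ≤ d) :
    UplusSet d x = doubleFan d x x := by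
  rw [UplusSet, boundarySet_eq (by omega),
    setOf_zero_pair_eq_natEdges (fun v hv => ⟨by omega, by omega⟩),
    opp_natCast, natEdges_singleton (by unfold oppNat; split_ifs; omega) (by omega)
      (oppNat_lt (by omega)),
    natEdges_union, symCl_natEdges, natEdges_union]
  exact natEdges_congr fun a b hab hb => by unfold FanEdge oppNat; split_ifs <;> omega

theorem comb_to_comb_upper_bound_general (d x : ℕ) (hx1 : 1 ≤ x) (hx2 : x ≤ d) :
    (flipGraph (2 * d + 2)).Reachable (UplusSet d x) (UminusSet d) ∧
      delta (2 * d + 2) (UplusSet d x) (UminusSet d) ≤ d - x + 1 := by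
  obtain ⟨p, hp⟩ := SimpleGraph.exists_walk_length_eq_of_adj_succ
    (G := flipGraph (2 * d + 2)) (fun y => doubleFan d y 0) hx2
    fun y hy hyd => flipGraph_adj_doubleFan_succ (by omega) hyd
  let q := p.cons (flipGraph_adj_doubleFan_diagonal hx1 hx2)
  rw [uplusSet_eq_doubleFan hx1 hx2, uminusSet_eq_doubleFan]
  refine ⟨q.reachable, (SimpleGraph.dist_le q).trans ?_⟩
  rw [SimpleGraph.Walk.length_cons, hp]

/-- for `1 ≤ x ≤ d`, the triangulation `U⁺` (diagonal `{x,x̄}`, the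
edges `{0,v}` for `v ∈ {2,…,x} ∪ {x̄,…,2d}`, and their centrally symmetric copies) can be
transformed into the double comb `U⁻` by at most `d - x + 1` flips. -/
theorem comb_to_comb_upper_bound (d x : ℕ) (hd : 1 ≤ d) (hx1 : 1 ≤ x) (hx2 : x ≤ d) :
    (flipGraph (2 * d + 2)).Reachable (UplusSet d x) (UminusSet d) ∧
      delta (2 * d + 2) (UplusSet d x) (UminusSet d) ≤ d - x + 1 :=
  comb_to_comb_upper_bound_general d x hx1 hx2

end Cyclo
end
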